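/- The constructed graph G′ has neighborhood diversity at most 3k + 12·C(k,2) = 6k² − 3k; in particular nd(G′) = O(k²), and moreover every type in a witnessing partition of V(G′) is an independent set. -/

import Mathlib

open Finset

section Activation

variable {V : Type*} [Fintype V] [DecidableEq V]

/-- One round of the activation process: a vertex becomes active if the number of its
already active neighbors is at least its threshold. -/
def actStep (G : SimpleGraph V) [DecidableRel G.Adj] (f : V → ℕ) (S : Finset V) : Finset V :=
  S ∪ Finset.univ.filter fun v => f v ≤ (G.neighborFinset v ∩ S).card

/-- The activation process arising from `S`: `S_0 = S` and
`S_{i+1} = S_i ∪ {v : |N(v) ∩ S_i| ≥ f v}`. -/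
def actProcess (G : SimpleGraph V) [DecidableRel G.Adj] (f : V → ℕ) (S : Finset V) : ℕ → Finset V
  | 0 => S
  | i + 1 => actStep G f (actProcess G f S i)

/-- `S` is a target set if the activation process arising from `S` eventually
activates the whole graph. -/
def IsTargetSet (G : SimpleGraph V) [DecidableRel G.Adj] (f : V → ℕ) (S : Finset V) : Prop :=
  ∃ i, actProcess G f S i = Finset.univ

end Activation

/-- Unordered pairs `a < b` of color classes. -/
abbrev ColPair (k : ℕ) := {p : Fin k × Fin k // p.1 < p.2}

/-- The color class of the side `c` of the pair `p` (`true` is the smaller side). -/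
def sideCol {k : ℕ} (p : ColPair k) (c : Bool) : Fin k :=
  if c then p.val.1 else p.val.2

/-- The vertices of the constructed graph `G'`: for every color class `a` the selection
gadget `L_a(n, n+1)` with selection parts `A_a`, `B_a` and guard `D_a`; for every pair
`a < b` the multiple gadget `M_ab(n², n²m, m, m+1)` with selection parts `A_ab`, `B_ab`,
guard `D_ab`, vertex sets `U_ab = {u_1, …, u_m}`, `W_ab = {w_1, …, w_m}` and guard
`P_ab`; and for every pair `a < b` and side `c` the incidence gadget with vertex sets
`X_{c:ab} = {x_0, …, x_m}`, `Y_{c:ab} = {y_0, …, y_m}` and guard `Z_{c:ab}`. -/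
inductive Vtx (k n m : ℕ) : Type
  | Aa (a : Fin k) (i : Fin n)
  | Ba (a : Fin k) (i : Fin n)
  | Da (a : Fin k) (i : Fin (n + 1))
  | Aab (p : ColPair k) (i : Fin (n ^ 2 * m))
  | Bab (p : ColPair k) (i : Fin (n ^ 2 * m))
  | Dab (p : ColPair k) (i : Fin (m + 1))
  | Uab (p : ColPair k) (i : Fin m)
  | Wab (p : ColPair k) (i : Fin m)
  | Pab (p : ColPair k) (i : Fin (n ^ 2 * m))
  | Xv (p : ColPair k) (c : Bool) (j : Fin (m + 1))
  | Yv (p : ColPair k) (c : Bool) (j : Fin (m + 1))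
  | Zv (p : ColPair k) (c : Bool) (i : Fin (n + n ^ 2 * m))
  deriving DecidableEq, Fintype

/-- One direction of the adjacency relation of `G'`, listing all joined pairs of sets:
`D_a` to `A_a` and `B_a`; `D_ab` to `A_ab` and `B_ab`; `U_ab` to `A_ab`; `W_ab` to
`B_ab`; `P_ab` to `U_ab` and `W_ab`; `X_{c:ab}` to `A_c` and `A_ab`; `Y_{c:ab}` to `B_c`
and `B_ab`; and `Z_{c:ab}` to `X_{c:ab}` and `Y_{c:ab}`. -/
def relB {k n m : ℕ} : Vtx k n m → Vtx k n m → Bool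
  | .Da a _, .Aa a' _ => decide (a = a')
  | .Da a _, .Ba a' _ => decide (a = a')
  | .Dab p _, .Aab p' _ => decide (p = p')
  | .Dab p _, .Bab p' _ => decide (p = p')
  | .Uab p _, .Aab p' _ => decide (p = p')
  | .Wab p _, .Bab p' _ => decide (p = p')
  | .Pab p _, .Uab p' _ => decide (p = p')
  | .Pab p _, .Wab p' _ => decide (p = p')
  | .Xv p c _, .Aa a _ => decide (sideCol p c = a)
  | .Xv p _ _, .Aab p' _ => decide (p = p')
  | .Yv p c _, .Ba a _ => decide (sideCol p c = a)
  | .Yv p _ _, .Bab p' _ => decide (p = p')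
  | .Zv p c _, .Xv p' c' _ => decide (p = p' ∧ c = c')
  | .Zv p c _, .Yv p' c' _ => decide (p = p' ∧ c = c')
  | _, _ => false

/-- The constructed graph `G'`. -/
def Gp (k n m : ℕ) : SimpleGraph (Vtx k n m) where
  Adj x y := x ≠ y ∧ (relB x y = true ∨ relB y x = true)
  symm := ⟨by rintro x y ⟨hne, h⟩; exact ⟨hne.symm, h.symm⟩⟩
  loopless := ⟨by rintro x ⟨hne, -⟩; exact hne rfl⟩

instance (k n m : ℕ) : DecidableRel (Gp k n m).Adj := fun x y =>
  inferInstanceAs (Decidable (x ≠ y ∧ (relB x y = true ∨ relB y x = true)))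

/-- The threshold function of `G'`, where `ep p c j` is the index in `V_{c(p)}` of the
endpoint of the edge `e_j ∈ E_ab` lying in the color class of side `c` of `p = (a,b)`:
vertices of the selection parts have threshold equal to their degree; guards `D_a` have
threshold `n`; guards `D_ab` have threshold `n²m`; `u_i` and `w_i` have threshold
`n²·i`; guards `P_ab` have threshold `m`; `x_j` has threshold `i + n²·j` and `y_j` has
threshold `(n - i) + n²·(m - j)` where `v_i` is the endpoint of `e_j` on the
corresponding side; and guards `Z_{c:ab}` have threshold `m + 2`. -/
def thr (k n m : ℕ) (ep : ColPair k → Bool → Fin (m + 1) → Fin (n + 1)) :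
    Vtx k n m → ℕ
  | .Aa a i => (Gp k n m).degree (.Aa a i)
  | .Ba a i => (Gp k n m).degree (.Ba a i)
  | .Da _ _ => n
  | .Aab p i => (Gp k n m).degree (.Aab p i)
  | .Bab p i => (Gp k n m).degree (.Bab p i)
  | .Dab _ _ => n ^ 2 * m
  | .Uab _ i => n ^ 2 * (i.val + 1)
  | .Wab _ i => n ^ 2 * (i.val + 1)
  | .Pab _ _ => m
  | .Xv p c j => (ep p c j).val + n ^ 2 * j.val
  | .Yv p c j => (n - (ep p c j).val) + n ^ 2 * (m - j.val)
  | .Zv _ _ _ => m + 2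

/-- Two (distinct) vertices have the same neighborhood type if
`N(u) \ {v} = N(v) \ {u}`. -/
def SameNType {V : Type*} (G : SimpleGraph V) (u v : V) : Prop :=
  G.neighborSet u \ {v} = G.neighborSet v \ {u}


/-- The label of a vertex: its gadget-part, determining its neighborhood type. -/
def lab {k n m : ℕ} : Vtx k n m → (Fin 3 × Fin k) ⊕ (Fin 6 × Bool × ColPair k)
  | .Aa a _ => .inl (0, a)
  | .Ba a _ => .inl (1, a)
  | .Da a _ => .inl (2, a)
  | .Aab p _ => .inr (0, true, p)
  | .Bab p _ => .inr (0, false, p)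
  | .Dab p _ => .inr (1, true, p)
  | .Uab p _ => .inr (1, false, p)
  | .Wab p _ => .inr (2, true, p)
  | .Pab p _ => .inr (2, false, p)
  | .Xv p c _ => .inr (3, c, p)
  | .Yv p c _ => .inr (4, c, p)
  | .Zv p c _ => .inr (5, c, p)

lemma lab_relB {k n m : ℕ} {u v : Vtx k n m} (h : lab u = lab v) :
    ∀ w, relB u w = relB v w ∧ relB w u = relB w v := by
  cases u <;> cases v <;>
      simp only [lab, Sum.inl.injEq, Sum.inr.injEq, Prod.mk.injEq, reduceCtorEq, Fin.reduceEq,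
        true_and, and_true, false_and, and_false] at h <;>
    first
    | (obtain ⟨rfl, rfl⟩ := h; intro w; cases w <;> exact ⟨rfl, rfl⟩)
    | (subst h; intro w; cases w <;> exact ⟨rfl, rfl⟩)

lemma relB_self_false {k n m : ℕ} (v : Vtx k n m) : relB v v = false := by
  cases v <;> rfl

lemma card_colpair (k : ℕ) : Fintype.card (ColPair k) = k * (k - 1) / 2 := by
  classical
  have h := Finset.offDiag_card (Finset.univ : Finset (Fin k))
  rw [Finset.card_univ, Fintype.card_fin] at h
  set s := Finset.univ.filter (fun p : Fin k × Fin k => p.1 < p.2) with hs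
  set t := Finset.univ.filter (fun p : Fin k × Fin k => p.2 < p.1) with ht
  have hst : s.card = t.card := by
    apply Finset.card_bij (fun p _ => p.swap)
    · intro p hp
      simp only [hs, ht, Finset.mem_filter, Finset.mem_univ, true_and] at hp ⊢
      exact hp
    · intro p _ q _ hpq
      exact Prod.swap_injective hpq
    · intro q hq
      refine ⟨q.swap, ?_, by simp⟩
      simp only [hs, ht, Finset.mem_filter, Finset.mem_univ, true_and] at hq ⊢
      exact hq
  have hunion : s ∪ t = (Finset.univ : Finset (Fin k)).offDiag := by
    ext p
    simp only [hs, ht, Finset.mem_union, Finset.mem_filter, Finset.mem_univ, true_and,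
      Finset.mem_offDiag]
    constructor
    · rintro (h' | h')
      · exact h'.ne
      · exact h'.ne'
    · intro h'
      exact lt_or_gt_of_ne h'
  have hdisj : Disjoint s t := by
    rw [Finset.disjoint_left]
    intro p hp hq
    simp only [hs, ht, Finset.mem_filter, Finset.mem_univ, true_and] at hp hq
    exact absurd hq (not_lt.2 hp.le)
  have hcard : s.card + t.card = k * k - k := by
    rw [← Finset.card_union_of_disjoint hdisj, hunion, h]
  have hC : Fintype.card (ColPair k) = s.card := Fintype.card_subtype _
  have h3 : k * (k - 1) = k * k - k := by
    rw [Nat.mul_sub_one]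
  have h4 : k ≤ k * k := by
    rcases Nat.eq_zero_or_pos k with rfl | hk
    · simp
    · exact Nat.le_mul_of_pos_left k hk
  rw [hC, h3]
  omega

set_option synthInstance.maxHeartbeats 1000000 in
/-- The constructed graph `G'` has neighborhood diversity at most
`3k + 12·C(k,2) = 6k² - 3k`, witnessed by a partition of its vertex set all of whose
types are independent sets. -/
theorem constructed_graph_nd (k n m : ℕ) (hk : 2 ≤ k) :
    ∃ P : Finpartition (Finset.univ : Finset (Vtx k n m)),
      P.parts.card ≤ 3 * k + 12 * (k * (k - 1) / 2) ∧
      3 * k + 12 * (k * (k - 1) / 2) = 6 * k ^ 2 - 3 * k ∧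
      (∀ C ∈ P.parts, ∀ u ∈ C, ∀ v ∈ C, u ≠ v → SameNType (Gp k n m) u v) ∧
      (∀ C ∈ P.parts, ∀ u ∈ C, ∀ v ∈ C, ¬ (Gp k n m).Adj u v) := by
  classical
  set s : Setoid (Vtx k n m) := Setoid.ker lab with hsdef
  haveI : DecidableRel s.r := fun a b => decidable_of_iff (lab a = lab b) Iff.rfl
  refine ⟨Finpartition.ofSetoid s, ?_, ?_, ?_, ?_⟩
  · -- card bound
    have hC := card_colpair k
    have hsub : (Finpartition.ofSetoid s).parts ⊆
        Finset.univ.image (fun ℓ => Finset.univ.filter (fun b : Vtx k n m => ℓ = lab b)) := by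
      intro C hC'
      simp only [Finpartition.ofSetoid, Finpartition.ofSetSetoid_parts, Finset.mem_image, Finset.mem_univ, true_and] at hC' ⊢
      obtain ⟨a, rfl⟩ := hC'
      exact ⟨lab a, by ext b; simp [hsdef, Setoid.ker, Function.onFun]⟩
    calc (Finpartition.ofSetoid s).parts.card
        ≤ _ := Finset.card_le_card hsub
      _ ≤ Finset.univ.card := Finset.card_image_le
      _ = Fintype.card ((Fin 3 × Fin k) ⊕ (Fin 6 × Bool × ColPair k)) := Finset.card_univ
      _ = 3 * k + 12 * (k * (k - 1) / 2) := by
          simp only [Fintype.card_sum, Fintype.card_prod, Fintype.card_fin,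
            Fintype.card_bool, card_colpair]
          ring
  · -- arithmetic identity
    obtain ⟨c, hc⟩ := Nat.even_mul_succ_self (k - 1)
    have h1 : k - 1 + 1 = k := by omega
    rw [h1] at hc
    have h2 : k * (k - 1) = c + c := by rw [mul_comm]; exact hc
    have h3 : k * (k - 1) = k * k - k := by rw [Nat.mul_sub_one]
    have h4 : k ≤ k * k := Nat.le_mul_of_pos_left k (by omega)
    have h6 : k * (k - 1) / 2 = c := by rw [h2]; omega
    have h5 : (6 : ℕ) * k ^ 2 = 6 * (k * k) := by ring
    rw [h6, h5]
    omega
  · -- same neighborhood type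
    intro C hC u hu v hv huv
    have hlab : lab u = lab v := by
      simp only [Finpartition.ofSetoid, Finpartition.ofSetSetoid_parts, Finset.mem_image, Finset.mem_univ, true_and] at hC
      obtain ⟨a, rfl⟩ := hC
      simp only [Finset.mem_filter, Finset.mem_univ, true_and] at hu hv
      exact hu.symm.trans hv
    have key := lab_relB hlab
    ext w
    simp only [SameNType, Set.mem_diff, SimpleGraph.mem_neighborSet, Set.mem_singleton_iff,
      Gp, ne_eq]
    rw [(key w).1, (key w).2]
    constructor
    · rintro ⟨⟨h1, h2⟩, h3⟩
      exact ⟨⟨fun h' => h3 h'.symm, h2⟩, fun h' => h1 h'.symm⟩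
    · rintro ⟨⟨h1, h2⟩, h3⟩
      exact ⟨⟨fun h' => h3 h'.symm, h2⟩, fun h' => h1 h'.symm⟩
  · -- independence
    intro C hC u hu v hv hadj
    have hlab : lab u = lab v := by
      simp only [Finpartition.ofSetoid, Finpartition.ofSetSetoid_parts, Finset.mem_image, Finset.mem_univ, true_and] at hC
      obtain ⟨a, rfl⟩ := hC
      simp only [Finset.mem_filter, Finset.mem_univ, true_and] at hu hv
      exact hu.symm.trans hv
    have key := lab_relB hlab v
    obtain ⟨-, h'⟩ := hadj
    rw [key.1, key.2, relB_self_false] at h'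
    simp at h'
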